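/- Let J₁ and J₂ be convex and connected subsets of (ℝ,≤)². If there exist a,a' ∈ J₁ and b,b' ∈ J₂ with a ≤ b and a' ≥ b', then J₁ ∩ J₂ ≠ ∅. -/

import Mathlib

/-- A zigzag path `a - x₁ - ⋯ - xₙ - b` in a preorder, where each consecutive
pair of points is comparable. -/
inductive Zigzag (P : Type) [Preorder P] : P → P → Type
  | single (a : P) : Zigzag P a a
  | consLe {a b c : P} (h : a ≤ b) (p : Zigzag P b c) : Zigzag P a c
  | consGe {a b c : P} (h : b ≤ a) (p : Zigzag P b c) : Zigzag P a c

/-- Convexity of a subset of a poset: `i ≤ j ≤ k` with `i, k ∈ J` implies `j ∈ J`. -/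
def PosetConvex {P : Type} [Preorder P] (J : Set P) : Prop :=
  ∀ i ∈ J, ∀ k ∈ J, ∀ j : P, i ≤ j → j ≤ k → j ∈ J

/-- Connectedness: any two points of `J` are joined by a finite zigzag path inside `J`. -/
def ZigzagConnected {P : Type} [Preorder P] (J : Set P) : Prop :=
  ∀ a b : J, Nonempty (Zigzag (↥J) a b)


/-!
Join `a` to `a'` by a path `γ` in `J₁` and `b` to `b'` by a path `δ` in `J₂`: a convex set
contains the order interval between any two of its comparable points, so zigzags become paths.
If some `γ s` lies both below and above points of `δ`, it lies in `J₂` by convexity. Otherwise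
the parameters `s` with `γ s` below some point of `δ`, and those with `γ s` above one, form
disjoint closed sets containing `0` and `1` respectively, so there is a gap `(s₁, s₂)` between
them on which `γ s` is incomparable with every point of `δ`. By connectedness, `δ` then lies
strictly on one side, say upper-left, of the whole arc `γ '' (s₁, s₂)`, hence weakly on that
side of `p = γ s₁` and `p' = γ s₂`. The corner `(p.1, p'.2)` lies between `p` and `p'` and
between two points of `δ`, so it belongs to `J₁ ∩ J₂`.
-/

open Set

section Paths

variable {E : Type} [AddCommGroup E] [PartialOrder E] [IsOrderedAddMonoid E] [Module ℝ E]
  [PosSMulMono ℝ E] [TopologicalSpace E] [ContinuousAdd E] [ContinuousSMul ℝ E] {J : Set E}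

theorem PosetConvex.joinedIn_of_le (hJ : PosetConvex J) {u v : E} (hu : u ∈ J) (hv : v ∈ J)
    (huv : u ≤ v) : JoinedIn J u v :=
  (((convex_Icc u v).isPathConnected (nonempty_Icc.2 huv)).joinedIn u ⟨le_rfl, huv⟩ v
    ⟨huv, le_rfl⟩).mono fun _ hw => hJ u hu v hv _ hw.1 hw.2

theorem PosetConvex.joinedIn_of_zigzag (hJ : PosetConvex J) {x y : J} (z : Zigzag J x y) :
    JoinedIn J x y := by
  induction z with
  | single x => exact JoinedIn.refl x.2
  | consLe h _ ih => exact (hJ.joinedIn_of_le (Subtype.mem _) (Subtype.mem _) h).trans ih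
  | consGe h _ ih => exact (hJ.joinedIn_of_le (Subtype.mem _) (Subtype.mem _) h).symm.trans ih

theorem PosetConvex.joinedIn (hJ : PosetConvex J) (hc : ZigzagConnected J) {a b : E}
    (ha : a ∈ J) (hb : b ∈ J) : JoinedIn J a b :=
  hJ.joinedIn_of_zigzag (hc ⟨a, ha⟩ ⟨b, hb⟩).some

end Paths

section ClosedComparison

variable {X Y Z : Type*} [TopologicalSpace X] [TopologicalSpace Y] [CompactSpace Y]
  [TopologicalSpace Z] [Preorder Z] [OrderClosedTopology Z] {f : X → Z} {g : Y → Z}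

theorem isClosed_setOf_exists_le (hf : Continuous f) (hg : Continuous g) :
    IsClosed {x | ∃ y, f x ≤ g y} := by
  have := isClosedMap_fst_of_compactSpace _
    (isClosed_le (hf.comp continuous_fst) (hg.comp continuous_snd))
  simpa [Set.image, Prod.exists] using this

theorem isClosed_setOf_exists_ge (hf : Continuous f) (hg : Continuous g) :
    IsClosed {x | ∃ y, g y ≤ f x} :=
  isClosed_setOf_exists_le (Z := Zᵒᵈ) hf hg

end ClosedComparison

theorem exists_Ioo_disjoint_of_isClosed {α : Type*} [CompleteLinearOrder α] [TopologicalSpace α]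
    [OrderTopology α] {D E : Set α} (hD : IsClosed D) (hE : IsClosed E) (hDE : Disjoint D E)
    (hbot : ⊥ ∈ D) (htop : ⊤ ∈ E) :
    ∃ s₁ ∈ D, ∃ s₂ ∈ E, s₁ < s₂ ∧ ∀ s ∈ Ioo s₁ s₂, s ∉ D ∧ s ∉ E := by
  have hs₂ : sInf E ∈ E := hE.sInf_mem ⟨⊤, htop⟩
  have hs₁ : sSup (D ∩ Iic (sInf E)) ∈ D ∩ Iic (sInf E) :=
    (hD.inter isClosed_Iic).sSup_mem ⟨⊥, hbot, bot_le⟩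
  refine ⟨_, hs₁.1, _, hs₂, hs₁.2.lt_of_ne fun h => disjoint_left.1 hDE hs₁.1 (h.symm ▸ hs₂),
    fun s hs => ⟨fun hsD => ?_, fun hsE => ?_⟩⟩
  · exact hs.1.not_ge (le_sSup ⟨hsD, hs.2.le⟩)
  · exact hs.2.not_ge (sInf_le hsE)

section Plane

variable {α β : Type} [LinearOrder α] [LinearOrder β]

theorem Prod.incompRel_le_iff {x y : α × β} :
    IncompRel (· ≤ ·) x y ↔ (y.1 < x.1 ∧ x.2 < y.2) ∨ (x.1 < y.1 ∧ y.2 < x.2) := by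
  simp only [IncompRel, Prod.le_def, not_and_or, not_le]
  grind

theorem IsPreconnected.upperLeft_or_lowerRight [TopologicalSpace α] [TopologicalSpace β]
    [OrderClosedTopology α] [OrderClosedTopology β] {A K : Set (α × β)} (hA : IsPreconnected A)
    (hK : IsPreconnected K) (h : ∀ a ∈ A, ∀ k ∈ K, IncompRel (· ≤ ·) a k) :
    (∀ a ∈ A, ∀ k ∈ K, k.1 < a.1 ∧ a.2 < k.2) ∨ (∀ a ∈ A, ∀ k ∈ K, a.1 < k.1 ∧ k.2 < a.2) := by
  set U := {x : (α × β) × (α × β) | x.2.1 < x.1.1 ∧ x.1.2 < x.2.2}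
  set V := {x : (α × β) × (α × β) | x.1.1 < x.2.1 ∧ x.2.2 < x.1.2}
  have hU : IsOpen U :=
    (isOpen_lt (by fun_prop) (by fun_prop)).inter (isOpen_lt (by fun_prop) (by fun_prop))
  have hV : IsOpen V :=
    (isOpen_lt (by fun_prop) (by fun_prop)).inter (isOpen_lt (by fun_prop) (by fun_prop))
  have hUV : Disjoint U V := disjoint_left.2 fun _ hu hv => hu.1.not_gt hv.1
  have hcover : A ×ˢ K ⊆ U ∪ V := fun x hx => Prod.incompRel_le_iff.1 (h _ hx.1 _ hx.2)
  rcases (hA.prod hK).subset_or_subset hU hV hUV hcover with hside | hside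
  · exact .inl fun a ha k hk => hside (mk_mem_prod ha hk)
  · exact .inr fun a ha k hk => hside (mk_mem_prod ha hk)

theorem PosetConvex.nonempty_inter_of_corner {J₁ J₂ : Set (α × β)} (h₁ : PosetConvex J₁)
    (h₂ : PosetConvex J₂) {p p' u v : α × β} (hp : p ∈ J₁) (hp' : p' ∈ J₁) (hu : u ∈ J₂)
    (hv : v ∈ J₂) (hpu : p ≤ u) (hvp' : v ≤ p')
    (hside : (v.1 ≤ p.1 ∧ p.2 ≤ v.2 ∧ u.1 ≤ p'.1 ∧ p'.2 ≤ u.2) ∨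
      (p.1 ≤ v.1 ∧ v.2 ≤ p.2 ∧ p'.1 ≤ u.1 ∧ u.2 ≤ p'.2)) :
    (J₁ ∩ J₂).Nonempty := by
  rcases hside with ⟨hvp, hpv, hup', hp'u⟩ | ⟨hpv, hvp, hp'u, hup'⟩
  · exact ⟨(p.1, p'.2), h₁ p hp p' hp' _ ⟨le_rfl, hpv.trans hvp'.2⟩ ⟨hpu.1.trans hup', le_rfl⟩,
      h₂ v hv u hu _ ⟨hvp, hvp'.2⟩ ⟨hpu.1, hp'u⟩⟩
  · exact ⟨(p'.1, p.2), h₁ p hp p' hp' _ ⟨hpv.trans hvp'.1, le_rfl⟩ ⟨le_rfl, hpu.2.trans hup'⟩,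
      h₂ v hv u hu _ ⟨hvp'.1, hvp⟩ ⟨hp'u, hpu.2⟩⟩

theorem PosetConvex.nonempty_inter_of_incompRel [TopologicalSpace α] [TopologicalSpace β]
    [OrderClosedTopology α] [OrderClosedTopology β] {J₁ J₂ A K : Set (α × β)}
    (h₁ : PosetConvex J₁) (h₂ : PosetConvex J₂) (hA : IsPreconnected A) (hK : IsPreconnected K)
    (hinc : ∀ a ∈ A, ∀ k ∈ K, IncompRel (· ≤ ·) a k) {p p' u v : α × β}
    (hpA : p ∈ closure A) (hp'A : p' ∈ closure A) (huK : u ∈ K) (hvK : v ∈ K)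
    (hp : p ∈ J₁) (hp' : p' ∈ J₁) (hu : u ∈ J₂) (hv : v ∈ J₂) (hpu : p ≤ u) (hvp' : v ≤ p') :
    (J₁ ∩ J₂).Nonempty := by
  refine h₁.nonempty_inter_of_corner h₂ hp hp' hu hv hpu hvp' ?_
  rcases hA.upperLeft_or_lowerRight hK hinc with hside | hside
  · have hle : ∀ k ∈ K, ∀ x ∈ closure A, k.1 ≤ x.1 ∧ x.2 ≤ k.2 := fun k hk =>
      closure_minimal (fun a ha => ⟨(hside a ha k hk).1.le, (hside a ha k hk).2.le⟩)
        ((isClosed_le continuous_const continuous_fst).inter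
          (isClosed_le continuous_snd continuous_const))
    exact .inl ⟨(hle v hvK p hpA).1, (hle v hvK p hpA).2, (hle u huK p' hp'A).1,
      (hle u huK p' hp'A).2⟩
  · have hle : ∀ k ∈ K, ∀ x ∈ closure A, x.1 ≤ k.1 ∧ k.2 ≤ x.2 := fun k hk =>
      closure_minimal (fun a ha => ⟨(hside a ha k hk).1.le, (hside a ha k hk).2.le⟩)
        ((isClosed_le continuous_fst continuous_const).inter
          (isClosed_le continuous_const continuous_snd))
    exact .inr ⟨(hle v hvK p hpA).1, (hle v hvK p hpA).2, (hle u huK p' hp'A).1,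
      (hle u huK p' hp'A).2⟩

end Plane

theorem statement4 (J₁ J₂ : Set (ℝ × ℝ))
    (hconv₁ : PosetConvex J₁) (hconn₁ : ZigzagConnected J₁)
    (hconv₂ : PosetConvex J₂) (hconn₂ : ZigzagConnected J₂)
    (a a' : ℝ × ℝ) (ha : a ∈ J₁) (ha' : a' ∈ J₁)
    (b b' : ℝ × ℝ) (hb : b ∈ J₂) (hb' : b' ∈ J₂)
    (hab : a ≤ b) (hba' : b' ≤ a') :
    (J₁ ∩ J₂).Nonempty := by
  obtain ⟨γ, hγ⟩ := hconv₁.joinedIn hconn₁ ha ha'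
  obtain ⟨δ, hδ⟩ := hconv₂.joinedIn hconn₂ hb hb'
  by_cases hmeet : ∃ s t t', γ s ≤ δ t ∧ δ t' ≤ γ s
  · obtain ⟨s, t, t', h, h'⟩ := hmeet
    exact ⟨γ s, hγ s, hconv₂ _ (hδ t') _ (hδ t) _ h' h⟩
  obtain ⟨s₁, ⟨t, hpu⟩, s₂, ⟨t', hvp'⟩, hs, hgap⟩ := exists_Ioo_disjoint_of_isClosed
    (isClosed_setOf_exists_le γ.continuous δ.continuous)
    (isClosed_setOf_exists_ge γ.continuous δ.continuous)
    (disjoint_left.2 fun s ⟨t, h⟩ ⟨t', h'⟩ => hmeet ⟨s, t, t', h, h'⟩)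
    ⟨0, show γ 0 ≤ δ 0 by simpa using hab⟩ ⟨1, show δ 1 ≤ γ 1 by simpa using hba'⟩
  have hIoo : s₁ ∈ closure (Ioo s₁ s₂) ∧ s₂ ∈ closure (Ioo s₁ s₂) := by
    rw [closure_Ioo hs.ne]
    exact ⟨left_mem_Icc.2 hs.le, right_mem_Icc.2 hs.le⟩
  refine hconv₁.nonempty_inter_of_incompRel hconv₂
    (isPreconnected_Ioo.image γ γ.continuous.continuousOn) (isPreconnected_range δ.continuous)
    ?_ (mem_closure_image γ.continuous.continuousAt hIoo.1)
    (mem_closure_image γ.continuous.continuousAt hIoo.2) (mem_range_self t) (mem_range_self t')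
    (hγ s₁) (hγ s₂) (hδ t) (hδ t') hpu hvp'
  rintro _ ⟨s, hs, rfl⟩ _ ⟨t, rfl⟩
  exact ⟨fun h => (hgap s hs).1 ⟨t, h⟩, fun h => (hgap s hs).2 ⟨t, h⟩⟩
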